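/- arXiv:2303.16086 — 2 statements merged into one kernel-verified Lean document; each statement's English description precedes it below -/
import Mathlib

section
/- For every n ≥ 1, the map Hom_R((R ⊗_k R)/I^n, R) → Hom_k(R,R) sending ψ to the k-linear map b ↦ ψ(class of 1 ⊗ b) is injective with image D^(n−1); consequently 𝒟_{R/k} is the union over n ≥ 1 of the images of these maps, i.e. 𝒟_{R/k} is the filtered colimit colim_n Hom_R((R ⊗_k R)/I^n, R) realized inside Hom_k(R,R). -/
open TensorProduct

noncomputable section

namespace GrothDiff

variable (k R : Type*) [CommRing k] [CommRing R] [Algebra k R]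

/-- The action of `R ⊗[k] R` on `Hom_k(R,R)` given by `((a₁ ⊗ a₂) • f) x = a₁ * f (a₂ * x)`. -/
def act : (R ⊗[k] R) →ₗ[k] (R →ₗ[k] R) →ₗ[k] (R →ₗ[k] R) :=
  TensorProduct.lift <| LinearMap.mk₂ k
    (fun a₁ a₂ =>
      { toFun := fun f => LinearMap.mulLeft k a₁ ∘ₗ f ∘ₗ LinearMap.mulLeft k a₂
        map_add' := fun f g => by ext x; simp [mul_add]
        map_smul' := fun c f => by ext x; simp [mul_smul_comm] })
    (fun a b c => by ext f x; simp [add_mul])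
    (fun c a b => by ext f x; simp [smul_mul_assoc])
    (fun a b c => by ext f x; simp [add_mul, mul_add])
    (fun a b c => by ext f x; simp [smul_mul_assoc, mul_smul_comm])

/-- `Dm k R n` is the Grothendieck order filtration `D^(n-1)`; in particular
`Dm k R 0 = D^(-1) = {0}` and `Dm k R (n+1) = D^(n)`. -/
def Dm : ℕ → Set (R →ₗ[k] R)
  | 0 => {0}
  | n + 1 =>
      {f | ∀ r : R,
        f ∘ₗ LinearMap.mulLeft k r - LinearMap.mulLeft k r ∘ₗ f ∈ Dm n}

/-- `D k R n` is the Grothendieck order filtration `D^(n)` for `n ≥ 0`. -/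
def D (n : ℕ) : Set (R →ₗ[k] R) := Dm k R (n + 1)

/-- The module of Grothendieck differential operators `𝒟_{R/k} = ⋃_{n ≥ 0} D^(n)`. -/
def GD : Set (R →ₗ[k] R) := ⋃ n : ℕ, D k R n

/-- The kernel `I` of the multiplication map `μ : R ⊗[k] R → R`. -/
def Ik : Ideal (R ⊗[k] R) := RingHom.ker (Algebra.TensorProduct.lmul' k (S := R))

/-- The map `Hom_R((R ⊗_k R)/I^n, R) → Hom_k(R,R)` sending `ψ` to the `k`-linear map
`b ↦ ψ (class of 1 ⊗ b)`, where `(R ⊗[k] R)/I^n` carries the first-factor `R`-module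
structure. -/
def fromQuot (n : ℕ)
    (ψ : ((R ⊗[k] R) ⧸ (Submodule.restrictScalars R ((Ik k R) ^ n))) →ₗ[R] R) :
    R →ₗ[k] R :=
  (ψ.restrictScalars k) ∘ₗ
    ((Submodule.mkQ (Submodule.restrictScalars R ((Ik k R) ^ n))).restrictScalars k) ∘ₗ
    (TensorProduct.mk k R R 1)

lemma act_tmul (a b : R) (f : R →ₗ[k] R) (x : R) :
    act k R (a ⊗ₜ b) f x = a * f (b * x) := by
  simp [act]

lemma act_mul (ξ η : R ⊗[k] R) (f : R →ₗ[k] R) :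
    act k R (ξ * η) f = act k R ξ (act k R η f) := by
  induction ξ using TensorProduct.induction_on with
  | zero => simp
  | tmul a b =>
    induction η using TensorProduct.induction_on with
    | zero => simp
    | tmul c d =>
      ext x
      simp [Algebra.TensorProduct.tmul_mul_tmul, act_tmul, mul_assoc, mul_left_comm]
    | add η₁ η₂ h1 h2 => simp [mul_add, h1, h2]
  | add ξ₁ ξ₂ h1 h2 => simp [add_mul, h1, h2]

lemma act_one (f : R →ₗ[k] R) : act k R 1 f = f := by
  ext x; simp [Algebra.TensorProduct.one_def, act_tmul]

lemma Ik_eq : Ik k R = KaehlerDifferential.ideal k R := rfl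

lemma delta_mem (r : R) : (1 : R) ⊗ₜ[k] r - r ⊗ₜ[k] (1 : R) ∈ Ik k R :=
  KaehlerDifferential.one_smul_sub_smul_one_mem_ideal k r

lemma act_delta (r : R) (f : R →ₗ[k] R) :
    act k R ((1 : R) ⊗ₜ[k] r - r ⊗ₜ[k] (1 : R)) f
      = f ∘ₗ LinearMap.mulLeft k r - LinearMap.mulLeft k r ∘ₗ f := by
  ext x
  simp [act_tmul]

lemma mem_Dm_iff (n : ℕ) (f : R →ₗ[k] R) :
    f ∈ Dm k R n ↔ ∀ ξ ∈ (Ik k R) ^ n, act k R ξ f = 0 := by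
  induction n generalizing f with
  | zero =>
    constructor
    · rintro rfl ξ _
      simp
    · intro h
      have := h 1 (by simp)
      rw [act_one] at this
      exact this
  | succ n ih =>
    constructor
    · intro hf ξ hξ
      rw [pow_succ] at hξ
      have key : ∀ a ∈ Ik k R, ∀ ζ ∈ (Ik k R) ^ n, act k R (ζ * a) f = 0 := by
        intro a ha
        rw [Ik_eq, ← KaehlerDifferential.span_range_eq_ideal] at ha
        induction ha using Submodule.span_induction with
        | mem x hx =>
          intro ζ hζ
          obtain ⟨s, rfl⟩ := hx
          rw [act_mul, act_delta]
          exact (ih _).mp (hf s) ζ hζ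
        | zero => intro ζ _; simp
        | add x y _ _ hx hy =>
          intro ζ hζ
          rw [mul_add, map_add]
          simp [hx ζ hζ, hy ζ hζ]
        | smul c x _ hx =>
          intro ζ hζ
          have h2 : ζ * (c • x) = (ζ * c) * x := by rw [smul_eq_mul]; ring
          rw [h2]
          exact hx (ζ * c) (Ideal.mul_mem_right c _ hζ)
      refine Submodule.mul_induction_on hξ ?_ ?_
      · intro ζ hζ a ha
        exact key a ha ζ hζ
      · intro x y hx hy
        rw [map_add]; simp [hx, hy]
    · intro h r
      rw [ih]
      intro ξ hξ
      rw [← act_delta, ← act_mul]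
      apply h
      rw [pow_succ]
      exact Submodule.mul_mem_mul hξ (delta_mem k R r)


lemma fromQuot_apply (n : ℕ)
    (ψ : ((R ⊗[k] R) ⧸ (Submodule.restrictScalars R ((Ik k R) ^ n))) →ₗ[R] R) (b : R) :
    fromQuot k R n ψ b
      = ψ (Submodule.mkQ (Submodule.restrictScalars R ((Ik k R) ^ n)) ((1:R) ⊗ₜ[k] b)) := rfl

lemma mkQ_tmul (n : ℕ)
    (ψ : ((R ⊗[k] R) ⧸ (Submodule.restrictScalars R ((Ik k R) ^ n))) →ₗ[R] R) (a b : R) :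
    ψ (Submodule.mkQ (Submodule.restrictScalars R ((Ik k R) ^ n)) (a ⊗ₜ[k] b))
      = a * fromQuot k R n ψ b := by
  have : (a ⊗ₜ[k] b : R ⊗[k] R) = a • ((1:R) ⊗ₜ[k] b) := by
    rw [TensorProduct.smul_tmul', smul_eq_mul, mul_one]
  rw [this, map_smul, map_smul, smul_eq_mul, fromQuot_apply]

lemma act_fromQuot (n : ℕ)
    (ψ : ((R ⊗[k] R) ⧸ (Submodule.restrictScalars R ((Ik k R) ^ n))) →ₗ[R] R)
    (ξ : R ⊗[k] R) (x : R) :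
    act k R ξ (fromQuot k R n ψ) x
      = ψ (Submodule.mkQ (Submodule.restrictScalars R ((Ik k R) ^ n)) (ξ * ((1:R) ⊗ₜ[k] x))) := by
  induction ξ using TensorProduct.induction_on with
  | zero => simp
  | tmul a b =>
    rw [Algebra.TensorProduct.tmul_mul_tmul, mul_one, mkQ_tmul, act_tmul]
  | add ξ₁ ξ₂ h1 h2 =>
    simp only [add_mul, map_add, LinearMap.add_apply, h1, h2]

lemma fromQuot_inj (n : ℕ) : Function.Injective (fromQuot k R n) := by
  intro ψ₁ ψ₂ h
  have key : ∀ ξ : R ⊗[k] R,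
      ψ₁ (Submodule.mkQ (Submodule.restrictScalars R ((Ik k R) ^ n)) ξ)
        = ψ₂ (Submodule.mkQ (Submodule.restrictScalars R ((Ik k R) ^ n)) ξ) := by
    intro ξ
    induction ξ using TensorProduct.induction_on with
    | zero => simp
    | tmul a b => rw [mkQ_tmul, mkQ_tmul, h]
    | add x y hx hy => rw [map_add, map_add, map_add, hx, hy]
  refine LinearMap.ext fun q => ?_
  obtain ⟨ξ, rfl⟩ := Submodule.mkQ_surjective (Submodule.restrictScalars R ((Ik k R) ^ n)) q
  exact key ξ

lemma range_fromQuot (n : ℕ) : Set.range (fromQuot k R n) = Dm k R n := by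
  ext f
  rw [mem_Dm_iff]
  constructor
  · rintro ⟨ψ, rfl⟩ ξ hξ
    ext x
    rw [LinearMap.zero_apply, act_fromQuot]
    have hmem : ξ * ((1:R) ⊗ₜ[k] x) ∈ Submodule.restrictScalars R ((Ik k R) ^ n) :=
      Ideal.mul_mem_right _ _ hξ
    rw [Submodule.mkQ_apply, (Submodule.Quotient.mk_eq_zero _).mpr hmem, map_zero]
  · intro hf
    set φ : R ⊗[k] R →ₗ[R] R :=
      TensorProduct.AlgebraTensorModule.lift (LinearMap.toSpanSingleton R (R →ₗ[k] R) f) with hφdef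
    have hφ : ∀ ξ : R ⊗[k] R, φ ξ = act k R ξ f 1 := by
      intro ξ
      induction ξ using TensorProduct.induction_on with
      | zero => simp
      | tmul a b => simp [hφdef, act_tmul, LinearMap.toSpanSingleton_apply]
      | add x y hx hy => simp only [map_add, LinearMap.add_apply, hx, hy]
    have hker : Submodule.restrictScalars R ((Ik k R) ^ n) ≤ LinearMap.ker φ := by
      intro ξ hξ
      rw [LinearMap.mem_ker, hφ, hf ξ hξ, LinearMap.zero_apply]
    refine ⟨Submodule.liftQ _ φ hker, ?_⟩
    ext b
    rw [fromQuot_apply, Submodule.mkQ_apply, Submodule.liftQ_apply, hφ, act_tmul, one_mul, mul_one]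



/-- For every `n ≥ 1`, the map `Hom_R((R ⊗_k R)/I^n, R) → Hom_k(R,R)`,
`ψ ↦ (b ↦ ψ [1 ⊗ b])`, is injective with image `D^(n−1)` (which is `Dm k R n` in our indexing);
consequently `𝒟_{R/k}` is the union over `n ≥ 1` of the images of these maps, realizing
`𝒟_{R/k}` as the filtered colimit `colim_n Hom_R((R ⊗_k R)/I^n, R)` inside `Hom_k(R,R)`. -/
theorem fromQuot_injective_image (n : ℕ) (hn : 1 ≤ n) :
    Function.Injective (fromQuot k R n) ∧
    Set.range (fromQuot k R n) = Dm k R n ∧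
    GD k R = ⋃ m : ℕ, ⋃ _ : 1 ≤ m, Set.range (fromQuot k R m) := by
  refine ⟨fromQuot_inj k R n, range_fromQuot k R n, ?_⟩
  ext f
  simp only [GD, D, Set.mem_iUnion, range_fromQuot]
  constructor
  · rintro ⟨m, hm⟩
    exact ⟨m + 1, Nat.succ_le_succ (Nat.zero_le m), hm⟩
  · rintro ⟨m, hm1, hm⟩
    obtain ⟨p, rfl⟩ := Nat.exists_eq_add_of_le hm1
    rw [Nat.add_comm] at hm
    exact ⟨p, hm⟩

end GrothDiff
end
end

section
/- For k = ℤ and R = ℤ[X], the module of Grothendieck differential operators 𝒟_{ℤ[X]/ℤ} is a free ℤ[X]-module with basis (h_n)_{n ≥ 0}: every f ∈ 𝒟_{ℤ[X]/ℤ} can be written uniquely as a finite sum f = Σ_n m_{p_n} ∘ h_n with p_n ∈ ℤ[X] almost all zero, where ℤ[X] acts on Hom_ℤ(ℤ[X],ℤ[X]) by postcomposition with multiplication operators. -/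
open TensorProduct

noncomputable section

namespace GrothDiff

variable (k R : Type*) [CommRing k] [CommRing R] [Algebra k R]

/-! ### Auxiliary lemmas -/

variable {k R}

lemma zero_mem_Dm : ∀ n : ℕ, (0 : R →ₗ[k] R) ∈ Dm k R n
  | 0 => rfl
  | n + 1 => fun r => by
      simpa using zero_mem_Dm n

lemma add_mem_Dm : ∀ n : ℕ, ∀ f g : R →ₗ[k] R,
    f ∈ Dm k R n → g ∈ Dm k R n → f + g ∈ Dm k R n
  | 0, f, g, hf, hg => by
      simp only [Dm, Set.mem_singleton_iff] at *
      simp [hf, hg]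
  | n + 1, f, g, hf, hg => fun r => by
      have : (f + g) ∘ₗ LinearMap.mulLeft k r - LinearMap.mulLeft k r ∘ₗ (f + g)
          = (f ∘ₗ LinearMap.mulLeft k r - LinearMap.mulLeft k r ∘ₗ f)
            + (g ∘ₗ LinearMap.mulLeft k r - LinearMap.mulLeft k r ∘ₗ g) := by
        refine LinearMap.ext fun x => ?_
        simp only [LinearMap.add_apply, LinearMap.sub_apply, LinearMap.comp_apply,
          LinearMap.mulLeft_apply, map_add, map_sub]
        ring
      rw [this]
      exact add_mem_Dm n _ _ (hf r) (hg r)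

lemma Dm_mono : ∀ n : ℕ, Dm k R n ⊆ Dm k R (n + 1)
  | 0 => fun f hf => by
      simp only [Dm, Set.mem_singleton_iff] at hf
      subst hf
      exact zero_mem_Dm 1
  | n + 1 => fun f hf r => Dm_mono n (hf r)

lemma Dm_mono_le {m n : ℕ} (h : m ≤ n) : Dm k R m ⊆ Dm k R n := by
  induction h with
  | refl => exact subset_rfl
  | step _ ih => exact ih.trans (Dm_mono _)

lemma mulLeft_comp_mem_Dm : ∀ n : ℕ, ∀ (q : R) (f : R →ₗ[k] R),
    f ∈ Dm k R n → LinearMap.mulLeft k q ∘ₗ f ∈ Dm k R n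
  | 0, q, f, hf => by
      simp only [Dm, Set.mem_singleton_iff] at *
      simp [hf]
  | n + 1, q, f, hf => fun r => by
      have : (LinearMap.mulLeft k q ∘ₗ f) ∘ₗ LinearMap.mulLeft k r
          - LinearMap.mulLeft k r ∘ₗ (LinearMap.mulLeft k q ∘ₗ f)
          = LinearMap.mulLeft k q ∘ₗ
            (f ∘ₗ LinearMap.mulLeft k r - LinearMap.mulLeft k r ∘ₗ f) := by
        refine LinearMap.ext fun x => ?_
        simp only [LinearMap.add_apply, LinearMap.sub_apply, LinearMap.comp_apply,
          LinearMap.mulLeft_apply, map_add, map_sub]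
        ring
      rw [this]
      exact mulLeft_comp_mem_Dm n q _ (hf r)

lemma comp_mulLeft_mem_Dm : ∀ n : ℕ, ∀ (q : R) (f : R →ₗ[k] R),
    f ∈ Dm k R n → f ∘ₗ LinearMap.mulLeft k q ∈ Dm k R n
  | 0, q, f, hf => by
      simp only [Dm, Set.mem_singleton_iff] at *
      simp [hf]
  | n + 1, q, f, hf => fun r => by
      have : (f ∘ₗ LinearMap.mulLeft k q) ∘ₗ LinearMap.mulLeft k r
          - LinearMap.mulLeft k r ∘ₗ (f ∘ₗ LinearMap.mulLeft k q)
          = (f ∘ₗ LinearMap.mulLeft k r - LinearMap.mulLeft k r ∘ₗ f)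
              ∘ₗ LinearMap.mulLeft k q := by
        refine LinearMap.ext fun x => ?_
        simp only [LinearMap.add_apply, LinearMap.sub_apply, LinearMap.comp_apply,
          LinearMap.mulLeft_apply, map_add, map_sub]
        ring
      rw [this]
      exact comp_mulLeft_mem_Dm n q _ (hf r)

open Polynomial

/-- If the commutator with `X` is in `Dm n`, then `f ∈ Dm (n+1)`. -/
lemma mem_Dm_succ_of_X {n : ℕ} {f : ℤ[X] →ₗ[ℤ] ℤ[X]}
    (hX : f ∘ₗ LinearMap.mulLeft ℤ (X : ℤ[X]) - LinearMap.mulLeft ℤ (X : ℤ[X]) ∘ₗ f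
      ∈ Dm ℤ ℤ[X] n) :
    f ∈ Dm ℤ ℤ[X] (n + 1) := by
  intro r
  induction r using Polynomial.induction_on with
  | C a =>
      have : f ∘ₗ LinearMap.mulLeft ℤ (C a) - LinearMap.mulLeft ℤ (C a) ∘ₗ f = 0 := by
        refine LinearMap.ext fun x => ?_
        simp only [LinearMap.sub_apply, LinearMap.comp_apply, LinearMap.mulLeft_apply,
          LinearMap.zero_apply]
        have h1 : (C a : ℤ[X]) * x = a • x := by
          rw [zsmul_eq_mul]; norm_cast
        have h2 : (C a : ℤ[X]) * f x = a • f x := by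
          rw [zsmul_eq_mul]; norm_cast
        rw [h1, h2, map_smul, sub_self]
      rw [this]
      exact zero_mem_Dm n
  | add p q hp hq =>
      have : f ∘ₗ LinearMap.mulLeft ℤ (p + q) - LinearMap.mulLeft ℤ (p + q) ∘ₗ f
          = (f ∘ₗ LinearMap.mulLeft ℤ p - LinearMap.mulLeft ℤ p ∘ₗ f)
            + (f ∘ₗ LinearMap.mulLeft ℤ q - LinearMap.mulLeft ℤ q ∘ₗ f) := by
        refine LinearMap.ext fun x => ?_
        simp only [LinearMap.add_apply, LinearMap.sub_apply, LinearMap.comp_apply,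
          LinearMap.mulLeft_apply, add_mul, map_add]
        ring
      rw [this]
      exact add_mem_Dm n _ _ hp hq
  | monomial m a hm =>
      have key : f ∘ₗ LinearMap.mulLeft ℤ (C a * X ^ (m + 1))
            - LinearMap.mulLeft ℤ (C a * X ^ (m + 1)) ∘ₗ f
          = (f ∘ₗ LinearMap.mulLeft ℤ (C a * X ^ m)
              - LinearMap.mulLeft ℤ (C a * X ^ m) ∘ₗ f) ∘ₗ LinearMap.mulLeft ℤ (X : ℤ[X])
            + LinearMap.mulLeft ℤ (C a * X ^ m) ∘ₗ
              (f ∘ₗ LinearMap.mulLeft ℤ (X : ℤ[X]) - LinearMap.mulLeft ℤ (X : ℤ[X]) ∘ₗ f) := by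
        refine LinearMap.ext fun x => ?_
        simp only [LinearMap.add_apply, LinearMap.sub_apply, LinearMap.comp_apply,
          LinearMap.mulLeft_apply]
        rw [show C a * X ^ (m + 1) * x = C a * X ^ m * (X * x) by ring]
        ring
      rw [key]
      exact add_mem_Dm n _ _ (comp_mulLeft_mem_Dm n _ _ hm) (mulLeft_comp_mem_Dm n _ _ hX)

lemma hasse_comm (n : ℕ) :
    Polynomial.hasseDeriv (n + 1) ∘ₗ LinearMap.mulLeft ℤ (X : ℤ[X])
      - LinearMap.mulLeft ℤ (X : ℤ[X]) ∘ₗ Polynomial.hasseDeriv (n + 1)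
    = (Polynomial.hasseDeriv n : ℤ[X] →ₗ[ℤ] ℤ[X]) := by
  apply Polynomial.lhom_ext'
  intro m
  refine LinearMap.ext fun a => ?_
  simp only [LinearMap.comp_apply, LinearMap.sub_apply, LinearMap.mulLeft_apply,
    X_mul_monomial, hasseDeriv_monomial]
  rcases le_or_gt (n + 1) m with h | h
  · have e1 : m + 1 - (n + 1) = m - n := by omega
    have e2 : m - (n + 1) + 1 = m - n := by omega
    rw [e1, e2, ← map_sub]
    congr 1
    rw [Nat.choose_succ_succ m n]
    push_cast
    ring
  · have e1 : m + 1 - (n + 1) = m - n := by omega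
    rw [e1, Nat.choose_eq_zero_of_lt h, Nat.choose_succ_succ m n,
      Nat.choose_eq_zero_of_lt h]
    push_cast
    simp

lemma hasse_mem_Dm : ∀ n : ℕ, (Polynomial.hasseDeriv n : ℤ[X] →ₗ[ℤ] ℤ[X]) ∈ Dm ℤ ℤ[X] (n + 1)
  | 0 => by
      intro r
      have : (Polynomial.hasseDeriv 0 : ℤ[X] →ₗ[ℤ] ℤ[X]) ∘ₗ LinearMap.mulLeft ℤ r
          - LinearMap.mulLeft ℤ r ∘ₗ Polynomial.hasseDeriv 0 = 0 := by
        rw [hasseDeriv_zero]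
        refine LinearMap.ext fun x => ?_
        simp
      rw [this]
      exact zero_mem_Dm 0
  | n + 1 => by
      apply mem_Dm_succ_of_X
      rw [hasse_comm]
      exact hasse_mem_Dm n

/-- The formal Hasse-basis coefficients of a linear endomorphism of `ℤ[X]`. -/
def hcoef (f : ℤ[X] →ₗ[ℤ] ℤ[X]) : ℕ → ℤ[X]
  | m => f (X ^ m) - ∑ j ∈ (Finset.range m).attach,
      hcoef f j * Polynomial.monomial (m - (j : ℕ)) ((m.choose j : ℤ))
  termination_by m => m
  decreasing_by exact Finset.mem_range.mp j.2

lemma hcoef_def (f : ℤ[X] →ₗ[ℤ] ℤ[X]) (m : ℕ) :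
    hcoef f m = f (X ^ m) - ∑ j ∈ Finset.range m,
      hcoef f j * Polynomial.monomial (m - j) ((m.choose j : ℤ)) := by
  rw [hcoef.eq_1]
  rw [Finset.sum_attach (Finset.range m)
    (fun j => hcoef f j * Polynomial.monomial (m - j) ((m.choose j : ℤ)))]

lemma hcoef_eval (f : ℤ[X] →ₗ[ℤ] ℤ[X]) (m : ℕ) :
    f (X ^ m) = ∑ j ∈ Finset.range (m + 1),
      hcoef f j * Polynomial.monomial (m - j) ((m.choose j : ℤ)) := by
  rw [Finset.sum_range_succ, hcoef_def]
  simp [Polynomial.monomial_one_right_eq_X_pow]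

lemma hcoef_unique (f : ℤ[X] →ₗ[ℤ] ℤ[X]) (a : ℕ → ℤ[X])
    (h : ∀ m, f (X ^ m) = ∑ j ∈ Finset.range (m + 1),
      a j * Polynomial.monomial (m - j) ((m.choose j : ℤ))) :
    ∀ m, hcoef f m = a m := by
  intro m
  induction m using Nat.strong_induction_on with
  | _ m ih =>
    rw [hcoef_def, h m, Finset.sum_range_succ]
    have : ∀ j ∈ Finset.range m,
        hcoef f j * Polynomial.monomial (m - j) ((m.choose j : ℤ))
        = a j * Polynomial.monomial (m - j) ((m.choose j : ℤ)) := by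
      intro j hj
      rw [ih j (Finset.mem_range.mp hj)]
    rw [Finset.sum_congr rfl this]
    simp [Polynomial.monomial_one_right_eq_X_pow]

lemma hcoef_zero (m : ℕ) : hcoef (0 : ℤ[X] →ₗ[ℤ] ℤ[X]) m = 0 :=
  hcoef_unique 0 (fun _ => 0) (by simp) m

lemma hcoef_shift (f : ℤ[X] →ₗ[ℤ] ℤ[X]) :
    ∀ j, hcoef (f ∘ₗ LinearMap.mulLeft ℤ (X : ℤ[X])
        - LinearMap.mulLeft ℤ (X : ℤ[X]) ∘ₗ f) j = hcoef f (j + 1) := by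
  apply hcoef_unique
  intro m
  have hL : (f ∘ₗ LinearMap.mulLeft ℤ (X : ℤ[X])
        - LinearMap.mulLeft ℤ (X : ℤ[X]) ∘ₗ f) (X ^ m)
      = f (X ^ (m + 1)) - X * f (X ^ m) := by
    simp only [LinearMap.sub_apply, LinearMap.comp_apply, LinearMap.mulLeft_apply]
    rw [← pow_succ']
  have hA : f (X ^ (m + 1)) = (∑ i ∈ Finset.range (m + 1),
      hcoef f (i + 1) * Polynomial.monomial (m + 1 - (i + 1)) (((m + 1).choose (i + 1) : ℤ)))
      + hcoef f 0 * Polynomial.monomial (m + 1 - 0) (((m + 1).choose 0 : ℤ)) := by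
    rw [hcoef_eval f (m + 1), Finset.sum_range_succ' _ (m + 1)]
  have hB : X * f (X ^ m) = (∑ i ∈ Finset.range m,
      X * (hcoef f (i + 1) * Polynomial.monomial (m - (i + 1)) ((m.choose (i + 1) : ℤ))))
      + X * (hcoef f 0 * Polynomial.monomial (m - 0) ((m.choose 0 : ℤ))) := by
    rw [hcoef_eval f m, Finset.mul_sum, Finset.sum_range_succ' _ m]
  rw [hL, hA, hB]
  have h0 : X * (hcoef f 0 * Polynomial.monomial (m - 0) ((m.choose 0 : ℤ)))
      = hcoef f 0 * Polynomial.monomial (m + 1 - 0) (((m + 1).choose 0 : ℤ)) := by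
    rw [mul_left_comm, X_mul_monomial]
    simp
  rw [h0]
  rw [add_sub_add_right_eq_sub]
  have hS2 : ∑ i ∈ Finset.range m,
        X * (hcoef f (i + 1) * Polynomial.monomial (m - (i + 1)) ((m.choose (i + 1) : ℤ)))
      = ∑ i ∈ Finset.range (m + 1),
        X * (hcoef f (i + 1) * Polynomial.monomial (m - (i + 1)) ((m.choose (i + 1) : ℤ))) := by
    rw [Finset.sum_range_succ, Nat.choose_succ_self]
    simp
  rw [hS2, ← Finset.sum_sub_distrib]
  apply Finset.sum_congr rfl
  intro i hi
  have him : i ≤ m := by simpa [Nat.lt_succ_iff] using Finset.mem_range.mp hi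
  have e1 : m + 1 - (i + 1) = m - i := by omega
  rw [e1, mul_left_comm, X_mul_monomial]
  rcases lt_or_eq_of_le him with hlt | rfl
  · have e2 : m - (i + 1) + 1 = m - i := by omega
    rw [e2, ← mul_sub, ← map_sub]
    have h := Nat.choose_succ_succ m i
    have h2 : (((m + 1).choose (i + 1) : ℤ)) - ((m.choose (i + 1) : ℤ)) = ((m.choose i : ℤ)) := by
      rw [h]; push_cast; ring
    rw [h2]
  · rw [Nat.choose_succ_self]
    simp

lemma hcoef_vanish : ∀ n : ℕ, ∀ f ∈ Dm ℤ ℤ[X] n, ∀ j, n ≤ j → hcoef f j = 0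
  | 0 => fun f hf j _ => by
      simp only [Dm, Set.mem_singleton_iff] at hf
      subst hf
      exact hcoef_zero j
  | n + 1 => fun f hf j hj => by
      obtain ⟨i, rfl⟩ : ∃ i, j = i + 1 := ⟨j - 1, by omega⟩
      rw [← hcoef_shift f i]
      exact hcoef_vanish n _ (hf X) i (by omega)

lemma hcoef_sum (p : ℕ →₀ ℤ[X]) (j : ℕ) :
    hcoef (p.sum fun n q => LinearMap.mulLeft ℤ q ∘ₗ Polynomial.hasseDeriv n) j = p j := by
  refine hcoef_unique _ _ (fun m => ?_) j
  have happ : (p.sum fun n q => LinearMap.mulLeft ℤ q ∘ₗ Polynomial.hasseDeriv n) (X ^ m)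
      = ∑ n ∈ p.support, p n * Polynomial.hasseDeriv n (X ^ m) := by
    rw [Finsupp.sum, LinearMap.coe_sum, Finset.sum_apply]
    simp [LinearMap.mulLeft_apply]
  rw [happ]
  have hterm : ∀ n : ℕ, p n * Polynomial.hasseDeriv n (X ^ m)
      = p n * Polynomial.monomial (m - n) ((m.choose n : ℤ)) := by
    intro n
    rw [← Polynomial.monomial_one_right_eq_X_pow, hasseDeriv_monomial, mul_one]
  rw [Finset.sum_congr rfl fun n _ => hterm n]
  have hsup : (∑ x ∈ p.support, p x * Polynomial.monomial (m - x) ((m.choose x : ℤ)))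
      = ∑ x ∈ p.support ∪ Finset.range (m + 1),
          p x * Polynomial.monomial (m - x) ((m.choose x : ℤ)) :=
    Finset.sum_subset Finset.subset_union_left
      (fun x _ hx => by simp [Finsupp.notMem_support_iff.mp hx])
  have hrange : (∑ x ∈ Finset.range (m + 1), p x * Polynomial.monomial (m - x) ((m.choose x : ℤ)))
      = ∑ x ∈ p.support ∪ Finset.range (m + 1),
          p x * Polynomial.monomial (m - x) ((m.choose x : ℤ)) :=
    Finset.sum_subset Finset.subset_union_right
      (fun x _ hx => by
        have hmx : m < x := by
          by_contra hcon
          exact hx (Finset.mem_range.mpr (by omega))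
        simp [Nat.choose_eq_zero_of_lt hmx])
  rw [hsup, hrange]

/-- Linear endomorphisms of `ℤ[X]` agreeing on all powers of `X` are equal. -/
lemma ext_of_X_pow {f g : ℤ[X] →ₗ[ℤ] ℤ[X]} (h : ∀ m, f (X ^ m) = g (X ^ m)) : f = g := by
  apply Polynomial.lhom_ext'
  intro s
  refine LinearMap.ext fun a => ?_
  have hm : (Polynomial.monomial s a : ℤ[X]) = a • (X ^ s) := by
    rw [← Polynomial.monomial_one_right_eq_X_pow, Polynomial.smul_monomial, smul_eq_mul, mul_one]
  simp only [LinearMap.comp_apply, hm, map_smul, h s]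

/-- For `k = ℤ` and `R = ℤ[X]`, the module of Grothendieck differential operators
`𝒟_{ℤ[X]/ℤ}` is a free `ℤ[X]`-module with basis `(h_n)_{n ≥ 0}`: every finite sum
`Σ_n m_{p_n} ∘ h_n` lies in `𝒟_{ℤ[X]/ℤ}`, and every `f ∈ 𝒟_{ℤ[X]/ℤ}` can be written uniquely
as a finite sum `f = Σ_n m_{p_n} ∘ h_n` with coefficients `p_n ∈ ℤ[X]` almost all zero (where
`ℤ[X]` acts on `Hom_ℤ(ℤ[X],ℤ[X])` by postcomposition with multiplication operators). -/
theorem GD_free_on_hasseDeriv :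
    (∀ p : ℕ →₀ Polynomial ℤ,
      (p.sum fun n q => LinearMap.mulLeft ℤ q ∘ₗ Polynomial.hasseDeriv n)
        ∈ GD ℤ (Polynomial ℤ)) ∧
    (∀ f ∈ GD ℤ (Polynomial ℤ),
      ∃! p : ℕ →₀ Polynomial ℤ,
        f = p.sum fun n q => LinearMap.mulLeft ℤ q ∘ₗ Polynomial.hasseDeriv n) := by
  constructor
  · intro p
    set N := p.support.sup id with hN
    have hmem : (p.sum fun n q => LinearMap.mulLeft ℤ q ∘ₗ Polynomial.hasseDeriv n)
        ∈ Dm ℤ ℤ[X] (N + 1) := by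
      rw [Finsupp.sum]
      refine Finset.sum_induction _ _ (fun a b ha hb => add_mem_Dm _ a b ha hb)
        (zero_mem_Dm _) (fun n hn => ?_)
      have h1 : (Polynomial.hasseDeriv n : ℤ[X] →ₗ[ℤ] ℤ[X]) ∈ Dm ℤ ℤ[X] (n + 1) :=
        hasse_mem_Dm n
      have h2 := mulLeft_comp_mem_Dm (n + 1) (p n) _ h1
      exact Dm_mono_le (by
        have : n ≤ N := Finset.le_sup (f := id) hn
        omega) h2
    exact Set.mem_iUnion.mpr ⟨N, hmem⟩
  · intro f hf
    obtain ⟨n, hn⟩ := Set.mem_iUnion.mp hf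
    have hvan : ∀ j, n + 1 ≤ j → hcoef f j = 0 := hcoef_vanish (n + 1) f hn
    refine ⟨Finsupp.onFinset (Finset.range (n + 1)) (hcoef f)
      (fun j hj => Finset.mem_range.mpr (by
        by_contra hcon
        exact hj (hvan j (by omega)))), ?_, ?_⟩
    · apply ext_of_X_pow
      intro m
      rw [hcoef_eval f m]
      have := hcoef_sum (Finsupp.onFinset (Finset.range (n + 1)) (hcoef f)
        (fun j hj => Finset.mem_range.mpr (by
          by_contra hcon
          exact hj (hvan j (by omega))))) 
      rw [hcoef_eval ((Finsupp.onFinset (Finset.range (n + 1)) (hcoef f)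
        (fun j hj => Finset.mem_range.mpr (by
          by_contra hcon
          exact hj (hvan j (by omega))))).sum
            fun n q => LinearMap.mulLeft ℤ q ∘ₗ Polynomial.hasseDeriv n) m]
      apply Finset.sum_congr rfl
      intro j _
      rw [this j]
      rfl
    · intro q hq
      ext j
      have h1 : hcoef f j = q j := by
        rw [hq]; exact hcoef_sum q j
      rw [← h1]
      rfl

end GrothDiff
end
end
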